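/- arXiv:1403.4217 — 3 statements merged into one kernel-verified Lean document; each statement's English description precedes it below -/
import Mathlib

section
/- Let Ψ: ℝᵈ × [0,T] → ℝ be a C² solution of the Hamilton-Jacobi equation -∂_t Ψ = H(∂_θ Ψ, θ) with H(u,θ) = Σ_k θ_k h̃(Δ_k u, k) + F(θ). Then U^i := ∂_{θ_i} Ψ solves the hyperbolic system -∂_t U^i = Σ_j g_j(U,θ) ∂_{θ_j} U^i + h̃(Δ_i U, i) + ∂_{θ_i} F(θ), where g_j(U,θ) = Σ_k θ_k ∂_{u_j} h̃(Δ_k U, k). -/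
/-!
Differentiate the Hamilton-Jacobi equation in the direction `θᵢ`. On the left, symmetry of the
second derivative turns `∂_{θᵢ}∂ₜΨ` into `∂ₜUⁱ`. On the right, the chain rule gives
`∂_u H(U, θ)[∂_{θᵢ}U] + ∂_{θᵢ}H(U, θ)`. Because `h̃(·, k)` depends only on differences, its
derivative vanishes on constant vectors, so `∂_u H(U, θ)[w] = ∑ⱼ gⱼ(U, θ) wⱼ`; finally
`∂_{θᵢ}Uʲ = ∂_{θⱼ}Uⁱ`, again by symmetry of the second derivative.
-/

section Calculus

variable {E F : Type*} [NormedAddCommGroup E] [NormedSpace ℝ E]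
  [NormedAddCommGroup F] [NormedSpace ℝ F]

theorem fderiv_apply_eq_zero_of_forall_add_smul_eq {f : E → F} {u v : E}
    (hf : DifferentiableAt ℝ f u) (h : ∀ s : ℝ, f (u + s • v) = f u) :
    fderiv ℝ f u v = 0 := by
  rw [← hf.lineDeriv_eq_fderiv, lineDeriv]
  simp [h]

theorem hasFDerivAt_fderiv_apply {Ψ : E → F} {x : E}
    (hΨ : DifferentiableAt ℝ (fderiv ℝ Ψ) x) (v : E) :
    HasFDerivAt (fun p => fderiv ℝ Ψ p v) ((fderiv ℝ (fderiv ℝ Ψ) x).flip v) x := by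
  simpa using hΨ.hasFDerivAt.clm_apply (hasFDerivAt_const v x)

end Calculus

variable {ι : Type*}

theorem ContinuousLinearMap.apply_sub_const [Fintype ι] [DecidableEq ι]
    (L : (ι → ℝ) →L[ℝ] ℝ) (hL : L 1 = 0) (b : ι → ℝ) (c : ℝ) :
    L (fun j => b j - c) = ∑ j, b j * L (Pi.single j 1) := by
  have hb : (fun j => b j - c) = ∑ j, b j • Pi.single j 1 - c • 1 := by
    rw [← pi_eq_sum_univ' b]
    ext j
    simp
  simp [hb, hL]

theorem fderiv_apply_sub_const_of_depends_on_differences [Fintype ι] [DecidableEq ι]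
    {f : (ι → ℝ) → ℝ} {k : ι}
    (hdep : ∀ u v : ι → ℝ, (∀ j, u j - u k = v j - v k) → f u = f v) {u : ι → ℝ}
    (hf : DifferentiableAt ℝ f u) (b : ι → ℝ) (c : ℝ) :
    fderiv ℝ f u (fun j => b j - c) = ∑ j, b j * fderiv ℝ f u (Pi.single j 1) := by
  refine ContinuousLinearMap.apply_sub_const _ ?_ b c
  exact fderiv_apply_eq_zero_of_forall_add_smul_eq hf fun s => hdep _ _ fun j => by simp

namespace PotentialMFG

def delta (k : ι) : (ι → ℝ) →L[ℝ] (ι → ℝ) :=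
  ContinuousLinearMap.pi fun j =>
    ContinuousLinearMap.proj (R := ℝ) (φ := fun _ : ι => ℝ) j - ContinuousLinearMap.proj k

variable [Fintype ι] (h : (ι → ℝ) → ι → ℝ) (F : (ι → ℝ) → ℝ)

def hamiltonian (u θ : ι → ℝ) : ℝ :=
  ∑ k, θ k * h (delta k u) k + F θ

/-- The coefficient `gⱼ(u, θ)` of the transport term. -/
noncomputable def drift [DecidableEq ι] (u θ : ι → ℝ) (j : ι) : ℝ :=
  ∑ k, θ k * fderiv ℝ (fun u => h u k) (delta k u) (Pi.single j 1)

variable {h F}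

open ContinuousLinearMap in
theorem hasFDerivAt_hamiltonian {u θ : ι → ℝ}
    (hh : ∀ k, DifferentiableAt ℝ (fun u => h u k) (delta k u)) (hF : DifferentiableAt ℝ F θ) :
    HasFDerivAt (Function.uncurry (hamiltonian h F))
      ((∑ k, (θ k • (fderiv ℝ (fun u => h u k) (delta k u)).comp ((delta k).comp (fst ℝ _ _)) +
        h (delta k u) k • (proj k).comp (snd ℝ _ _))) + (fderiv ℝ F θ).comp (snd ℝ _ _))
      (u, θ) := by
  refine (HasFDerivAt.fun_sum fun k _ => ?_).add (hF.hasFDerivAt.comp _ hasFDerivAt_snd)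
  have hhk := (hh k).hasFDerivAt.comp (u, θ) ((delta k).hasFDerivAt.comp _ hasFDerivAt_fst)
  exact (hasFDerivAt_pi'.1 hasFDerivAt_snd k).fun_mul hhk

theorem fderiv_hamiltonian_comp_apply [DecidableEq ι] {E : Type*} [NormedAddCommGroup E]
    [NormedSpace ℝ E] {u θ : E → ι → ℝ} {u' θ' : E →L[ℝ] ι → ℝ} {x : E}
    (hu : HasFDerivAt u u' x) (hθ : HasFDerivAt θ θ' x)
    (hdep : ∀ k u v, (∀ j, u j - u k = v j - v k) → h u k = h v k)
    (hh : ∀ k, DifferentiableAt ℝ (fun u => h u k) (delta k (u x)))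
    (hF : DifferentiableAt ℝ F (θ x)) (e : E) :
    fderiv ℝ (fun p => hamiltonian h F (u p) (θ p)) x e =
      ∑ j, drift h (u x) (θ x) j * u' e j + ∑ k, θ' e k * h (delta k (u x)) k +
        fderiv ℝ F (θ x) (θ' e) := by
  have hgrad : ∀ k, fderiv ℝ (fun v => h v k) (delta k (u x)) (delta k (u' e)) =
      ∑ j, u' e j * fderiv ℝ (fun v => h v k) (delta k (u x)) (Pi.single j 1) := fun k =>
    fderiv_apply_sub_const_of_depends_on_differences (hdep k) (hh k) (u' e) (u' e k)
  have hchain := (hasFDerivAt_hamiltonian hh hF).comp x (hu.prodMk hθ)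
  simp only [HasFDerivAt.fderiv (f := fun p => hamiltonian h F (u p) (θ p)) hchain,
    ContinuousLinearMap.comp_apply, ContinuousLinearMap.prod_apply, add_apply, FunLike.coe_sum,
    Finset.sum_apply, smul_apply, ContinuousLinearMap.coe_fst', ContinuousLinearMap.coe_snd',
    ContinuousLinearMap.proj_apply, smul_eq_mul, hgrad, Finset.sum_add_distrib, drift,
    Finset.mul_sum, Finset.sum_mul]
  rw [Finset.sum_comm]
  congr 2
  · exact Finset.sum_congr rfl fun j _ => Finset.sum_congr rfl fun k _ => by ring
  · exact Finset.sum_congr rfl fun k _ => mul_comm _ _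

end PotentialMFG

/-- Potential mean field games: if `Ψ(θ,t)` is a `C²` solution of the Hamilton-Jacobi
equation `-∂ₜΨ = H(∂_θΨ, θ)` with `H(u,θ) = ∑ₖ θₖ h̃(Δₖu, k) + F(θ)`, where
`Δₖu = (u¹-uᵏ,…,u^d-uᵏ)`, then `Uⁱ := ∂_{θᵢ}Ψ` solves the hyperbolic system
`-∂ₜUⁱ = ∑ⱼ gⱼ(U,θ) ∂_{θⱼ}Uⁱ + h̃(ΔᵢU, i) + ∂_{θᵢ}F(θ)` with
`gⱼ(U,θ) = ∑ₖ θₖ ∂_{uⱼ}h̃(ΔₖU, k)`.  Partial derivatives are expressed via `fderiv`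
in the coordinate directions. -/
theorem potential_mfg_gradient_solves_system (d : ℕ)
    (Ψ : ((Fin d → ℝ) × ℝ) → ℝ) (htil : (Fin d → ℝ) → Fin d → ℝ)
    (F : (Fin d → ℝ) → ℝ)
    (hΨ : ContDiff ℝ 2 Ψ)
    (hhtil : ∀ k, Differentiable ℝ (fun u => htil u k))
    (hF : Differentiable ℝ F)
    (hdep : ∀ k : Fin d, ∀ u v : Fin d → ℝ,
      (∀ j, u j - u k = v j - v k) → htil u k = htil v k)
    (hHJ : ∀ θ : Fin d → ℝ, ∀ t : ℝ,
      -(fderiv ℝ Ψ (θ, t) (0, 1)) =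
        (∑ k, θ k * htil (fun j =>
            fderiv ℝ Ψ (θ, t) (Pi.single j 1, 0) -
              fderiv ℝ Ψ (θ, t) (Pi.single k 1, 0)) k) + F θ) :
    ∀ i : Fin d, ∀ θ : Fin d → ℝ, ∀ t : ℝ,
      -(fderiv ℝ (fun p => fderiv ℝ Ψ p (Pi.single i 1, 0)) (θ, t) (0, 1)) =
        (∑ j, (∑ k, θ k *
            fderiv ℝ (fun u => htil u k)
              (fun l => fderiv ℝ Ψ (θ, t) (Pi.single l 1, 0) -
                fderiv ℝ Ψ (θ, t) (Pi.single k 1, 0)) (Pi.single j 1)) *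
          fderiv ℝ (fun p => fderiv ℝ Ψ p (Pi.single i 1, 0)) (θ, t) (Pi.single j 1, 0))
        + htil (fun j => fderiv ℝ Ψ (θ, t) (Pi.single j 1, 0) -
            fderiv ℝ Ψ (θ, t) (Pi.single i 1, 0)) i
        + fderiv ℝ F θ (Pi.single i 1) := by
  intro i θ t
  set x : (Fin d → ℝ) × ℝ := (θ, t)
  set e : (Fin d → ℝ) × ℝ := (Pi.single i 1, 0)
  have hΨ' : Differentiable ℝ (fderiv ℝ Ψ) := (hΨ.fderiv_right le_rfl).differentiable one_ne_zero
  have hsymm : IsSymmSndFDerivAt ℝ Ψ x := hΨ.contDiffAt.isSymmSndFDerivAt (by simp)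
  set U : (Fin d → ℝ) × ℝ → Fin d → ℝ := fun p j => fderiv ℝ Ψ p (Pi.single j 1, 0)
  have hU : HasFDerivAt U (ContinuousLinearMap.pi fun j =>
      (fderiv ℝ (fderiv ℝ Ψ) x).flip (Pi.single j 1, 0)) x :=
    hasFDerivAt_pi.2 fun j => hasFDerivAt_fderiv_apply (hΨ' x) _
  have hHJ' : (fun p => -fderiv ℝ Ψ p (0, 1)) =
      fun p => PotentialMFG.hamiltonian htil F (U p) p.1 :=
    funext fun p => hHJ p.1 p.2
  have key : fderiv ℝ (fun p => -fderiv ℝ Ψ p (0, 1)) x e =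
      fderiv ℝ (fun p => PotentialMFG.hamiltonian htil F (U p) p.1) x e := by
    rw [hHJ']
  rw [(hasFDerivAt_fderiv_apply (hΨ' x) (0, 1)).fun_neg.fderiv,
    PotentialMFG.fderiv_hamiltonian_comp_apply hU hasFDerivAt_fst hdep (fun k => hhtil k _)
      (hF θ)] at key
  simp only [e, neg_apply, ContinuousLinearMap.flip_apply, ContinuousLinearMap.pi_apply,
    ContinuousLinearMap.coe_fst', Pi.single_apply, ite_mul, one_mul, zero_mul,
    Finset.sum_ite_eq', Finset.mem_univ, if_true] at key
  rw [(hasFDerivAt_fderiv_apply (hΨ' x) e).fderiv]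
  simp only [ContinuousLinearMap.flip_apply, hsymm _ e]
  exact key
end

section
/- Let w be a C¹ function and suppose U = (U¹,U²) is a C¹ solution to the two-state system -U^i_t = Σ_j g_j(U,θ) ∂_{θ_j} U^i + h(U,θ,i), with g₂ = -g₁. Then w(ζ,t) := U¹(ζ,1-ζ,t) - U²(ζ,1-ζ,t) satisfies the scalar equation -w_t + r(w,ζ) ∂_ζ w = q(w,ζ), where r(w,ζ) = -g₁(w,0,ζ,1-ζ) and q(w,ζ) = h(w,0,ζ,1-ζ,1) - h(w,0,ζ,1-ζ,2). -/
/-- Reduction of the two-state system to a scalar equation.  If `U = (U¹,U²)` is a `C¹`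
solution of `-∂ₜUⁱ = g₁ ∂_{θ₁}Uⁱ + g₂ ∂_{θ₂}Uⁱ + h(U,θ,i)` with `g₂ = -g₁`, where `g₁`
and `h` depend on `(U¹,U²)` only through the difference `U¹-U²`, then
`w(ζ,t) := U¹(ζ,1-ζ,t) - U²(ζ,1-ζ,t)` satisfies `-wₜ + r(w,ζ) ∂_ζ w = q(w,ζ)` with
`r(w,ζ) = -g₁(w,0,ζ,1-ζ)`, `q(w,ζ) = h(w,0,ζ,1-ζ,1) - h(w,0,ζ,1-ζ,2)`, where
`∂_ζ w` denotes `(∂_{θ₁} - ∂_{θ₂})(U¹-U²)` evaluated at `(ζ,1-ζ)`. -/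
theorem two_state_reduction_to_scalar
    (U1 U2 : ℝ × ℝ × ℝ → ℝ)
    (g1 : ℝ → ℝ → ℝ → ℝ → ℝ) (h : ℝ → ℝ → ℝ → ℝ → Fin 2 → ℝ)
    (hU1 : Differentiable ℝ U1) (hU2 : Differentiable ℝ U2)
    (hgdep : ∀ a b θ1 θ2 : ℝ, g1 a b θ1 θ2 = g1 (a - b) 0 θ1 θ2)
    (hhdep : ∀ a b θ1 θ2 : ℝ, ∀ i : Fin 2, h a b θ1 θ2 i = h (a - b) 0 θ1 θ2 i)
    (hsys1 : ∀ p : ℝ × ℝ × ℝ,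
      -(fderiv ℝ U1 p (0, 0, 1)) =
        g1 (U1 p) (U2 p) p.1 p.2.1 * fderiv ℝ U1 p (1, 0, 0) +
          (-(g1 (U1 p) (U2 p) p.1 p.2.1)) * fderiv ℝ U1 p (0, 1, 0) +
          h (U1 p) (U2 p) p.1 p.2.1 0)
    (hsys2 : ∀ p : ℝ × ℝ × ℝ,
      -(fderiv ℝ U2 p (0, 0, 1)) =
        g1 (U1 p) (U2 p) p.1 p.2.1 * fderiv ℝ U2 p (1, 0, 0) +
          (-(g1 (U1 p) (U2 p) p.1 p.2.1)) * fderiv ℝ U2 p (0, 1, 0) +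
          h (U1 p) (U2 p) p.1 p.2.1 1) :
    ∀ ζ t : ℝ,
      -(fderiv ℝ U1 (ζ, 1 - ζ, t) (0, 0, 1) - fderiv ℝ U2 (ζ, 1 - ζ, t) (0, 0, 1)) +
        (-(g1 (U1 (ζ, 1 - ζ, t) - U2 (ζ, 1 - ζ, t)) 0 ζ (1 - ζ))) *
          ((fderiv ℝ U1 (ζ, 1 - ζ, t) (1, 0, 0) - fderiv ℝ U1 (ζ, 1 - ζ, t) (0, 1, 0)) -
            (fderiv ℝ U2 (ζ, 1 - ζ, t) (1, 0, 0) - fderiv ℝ U2 (ζ, 1 - ζ, t) (0, 1, 0))) =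
      h (U1 (ζ, 1 - ζ, t) - U2 (ζ, 1 - ζ, t)) 0 ζ (1 - ζ) 0 -
        h (U1 (ζ, 1 - ζ, t) - U2 (ζ, 1 - ζ, t)) 0 ζ (1 - ζ) 1 := by
  intro ζ t
  have h1 := hsys1 (ζ, 1 - ζ, t)
  have h2 := hsys2 (ζ, 1 - ζ, t)
  dsimp only at h1 h2
  rw [hgdep (U1 _) (U2 _), hhdep (U1 _) (U2 _)] at h1 h2
  linarith
end

section
/- Let S: [0,T] → ℝ≥0 be continuous and satisfy S(t) ≤ C + S(T) + ∫_t^T S(σ)^{3/2} dσ for all t ≤ T (a backward nonlinear Gronwall inequality with exponent 3/2). Then there exists t₀ < T, depending only on C and S(T), such that S is bounded on [t₀, T], with a bound of the form S(t) ≤ C'/(t - t₀)² for t₀ < t ≤ T for a constant C' depending only on C and S(T). -/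
open Topology Filter


/-- Backward nonlinear Gronwall inequality with exponent `3/2`: if `S ≥ 0` is continuous
on `[0,T]` and satisfies `S t ≤ C + S T + ∫ₜᵀ S σ ^ (3/2) dσ` for all `t ∈ [0,T]`, then
there exists `t₀ < T`, with `T - t₀ = δ` and a constant `C'` depending only on `C` and
`S T`, such that `S t ≤ C' / (t - t₀)²` for `t₀ < t ≤ T`; in particular `S` is bounded
on `[t₀,T] ∩ [0,T]` away from `t₀`. -/
theorem backward_nonlinear_gronwall :
    ∃ δ C' : ℝ → ℝ → ℝ,
      ∀ (T C : ℝ) (S : ℝ → ℝ), 0 < T → 0 ≤ C →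
        ContinuousOn S (Set.Icc 0 T) → (∀ t ∈ Set.Icc (0 : ℝ) T, 0 ≤ S t) →
        (∀ t ∈ Set.Icc (0 : ℝ) T,
          S t ≤ C + S T + ∫ σ in t..T, S σ ^ (3 / 2 : ℝ)) →
        T - δ C (S T) < T ∧
        ∀ t ∈ Set.Ioc (T - δ C (S T)) T, t ∈ Set.Icc (0 : ℝ) T →
          S t ≤ C' C (S T) / (t - (T - δ C (S T))) ^ 2 := by
  refine ⟨fun C s => (C + s + 1) / (2 * (C + s + 1)) ^ (3 / 2 : ℝ),
    fun C s => 2 * (C + s + 1) *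
      ((C + s + 1) / (2 * (C + s + 1)) ^ (3 / 2 : ℝ)) ^ 2,
    fun T C S hT hC hcont hpos hineq => ?_⟩
  have hsT : 0 ≤ S T := hpos T ⟨hT.le, le_rfl⟩
  set A : ℝ := C + S T + 1 with hAdef
  have hA1 : 1 ≤ A := by simp only [hAdef]; linarith
  have hA0 : 0 < A := by linarith
  have h2A : (0 : ℝ) < (2 * A) ^ (3 / 2 : ℝ) :=
    Real.rpow_pos_of_pos (by linarith) _
  set δ : ℝ := A / (2 * A) ^ (3 / 2 : ℝ) with hδdef
  have hδ0 : 0 < δ := div_pos hA0 h2A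
  have hδmul : δ * (2 * A) ^ (3 / 2 : ℝ) = A := div_mul_cancel₀ _ h2A.ne'
  set t₁ : ℝ := max 0 (T - δ) with ht₁def
  have ht₁0 : 0 ≤ t₁ := le_max_left _ _
  have ht₁T : t₁ ≤ T := max_le hT.le (by linarith)
  have ht₁sub : Set.Icc t₁ T ⊆ Set.Icc 0 T := Set.Icc_subset_Icc ht₁0 le_rfl
  -- main a priori bound
  have key : ∀ t ∈ Set.Icc t₁ T, S t ≤ 2 * A := by
    by_contra h
    push_neg at h
    obtain ⟨u, hu, hSu⟩ := h
    set B : Set ℝ := Set.Icc t₁ T ∩ S ⁻¹' Set.Ici (2 * A) with hBdef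
    have hBne : B.Nonempty := ⟨u, hu, hSu.le⟩
    have hBclosed : IsClosed B :=
      (hcont.mono ht₁sub).preimage_isClosed_of_isClosed isClosed_Icc isClosed_Ici
    have hBbdd : BddAbove B := ⟨T, fun x hx => hx.1.2⟩
    set τ : ℝ := sSup B with hτdef
    have hτB : τ ∈ B := hBclosed.csSup_mem hBne hBbdd
    have hτ0 : 0 ≤ τ := le_trans ht₁0 hτB.1.1
    have hτT : τ ≤ T := hτB.1.2
    have hSτ : 2 * A ≤ S τ := hτB.2
    have hτltT : τ < T := by
      rcases lt_or_eq_of_le hτT with h | h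
      · exact h
      · exfalso; rw [h] at hSτ; simp only [hAdef] at hSτ; linarith
    have hIoc : ∀ σ ∈ Set.Ioc τ T, S σ ≤ 2 * A := by
      intro σ hσ
      by_contra hσ'
      push_neg at hσ'
      have hσB : σ ∈ B := ⟨⟨le_trans hτB.1.1 hσ.1.le, hσ.2⟩, hσ'.le⟩
      exact absurd (le_csSup hBbdd hσB) (not_le.mpr hσ.1)
    have hSτle : S τ ≤ 2 * A := by
      have hmemIoc : Set.Ioc τ T ∈ 𝓝[>] τ := Ioc_mem_nhdsGT hτltT
      have hmem : Set.Icc 0 T ∈ 𝓝[>] τ :=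
        Filter.mem_of_superset hmemIoc fun x hx => ⟨le_trans hτ0 hx.1.le, hx.2⟩
      have htend : Filter.Tendsto S (𝓝[>] τ) (𝓝 (S τ)) :=
        (hcont τ ⟨hτ0, hτT⟩).mono_left (nhdsWithin_le_iff.mpr hmem)
      exact le_of_tendsto htend (by filter_upwards [hmemIoc] with σ hσ using hIoc σ hσ)
    have hIcc : ∀ σ ∈ Set.Icc τ T, S σ ≤ 2 * A := by
      intro σ hσ
      rcases eq_or_lt_of_le hσ.1 with h | h
      · rwa [← h]
      · exact hIoc σ ⟨h, hσ.2⟩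
    -- integrand bound
    have hle : ∀ σ ∈ Set.Icc τ T, S σ ^ (3 / 2 : ℝ) ≤ (2 * A) ^ (3 / 2 : ℝ) := by
      intro σ hσ
      exact Real.rpow_le_rpow (hpos σ ⟨le_trans hτ0 hσ.1, hσ.2⟩) (hIcc σ hσ) (by norm_num)
    have hcont32 : ContinuousOn (fun σ => S σ ^ (3 / 2 : ℝ)) (Set.Icc 0 T) := by
      apply ContinuousOn.comp (g := fun x : ℝ => x ^ (3 / 2 : ℝ)) _ hcont
        (Set.mapsTo_univ _ _)
      intro x _
      exact (Real.continuousAt_rpow_const x _ (Or.inr (by norm_num))).continuousWithinAt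
    have hint1 : IntervalIntegrable (fun σ => S σ ^ (3 / 2 : ℝ)) MeasureTheory.volume τ T := by
      apply (hcont32.mono _).intervalIntegrable
      rw [Set.uIcc_of_le hτT]
      exact Set.Icc_subset_Icc hτ0 le_rfl
    have hint2 : IntervalIntegrable (fun _ : ℝ => (2 * A) ^ (3 / 2 : ℝ))
        MeasureTheory.volume τ T := intervalIntegrable_const
    have hintle : (∫ σ in τ..T, S σ ^ (3 / 2 : ℝ)) ≤ (T - τ) * (2 * A) ^ (3 / 2 : ℝ) := by
      calc (∫ σ in τ..T, S σ ^ (3 / 2 : ℝ))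
          ≤ ∫ _ in τ..T, (2 * A) ^ (3 / 2 : ℝ) :=
            intervalIntegral.integral_mono_on hτT hint1 hint2 hle
        _ = (T - τ) * (2 * A) ^ (3 / 2 : ℝ) := by
            rw [intervalIntegral.integral_const, smul_eq_mul]
    have hTτ : T - τ ≤ δ := by
      have : T - δ ≤ t₁ := le_max_right _ _
      have := hτB.1.1
      linarith
    have hintA : (∫ σ in τ..T, S σ ^ (3 / 2 : ℝ)) ≤ A := by
      calc (∫ σ in τ..T, S σ ^ (3 / 2 : ℝ)) ≤ (T - τ) * (2 * A) ^ (3 / 2 : ℝ) := hintle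
        _ ≤ δ * (2 * A) ^ (3 / 2 : ℝ) := by
            apply mul_le_mul_of_nonneg_right hTτ h2A.le
        _ = A := hδmul
    have := hineq τ ⟨hτ0, hτT⟩
    simp only [hAdef] at hSτ hintA this
    linarith
  show T - δ < T ∧ ∀ t ∈ Set.Ioc (T - δ) T, t ∈ Set.Icc 0 T →
      S t ≤ 2 * A * δ ^ 2 / (t - (T - δ)) ^ 2
  refine ⟨by linarith, ?_⟩
  intro t ht htIcc
  have htt₁ : t₁ ≤ t := max_le htIcc.1 ht.1.le
  have hSt : S t ≤ 2 * A := key t ⟨htt₁, ht.2⟩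
  have htpos : 0 < t - (T - δ) := by have := ht.1; simp only [hδdef, hAdef] at *; linarith
  have htle : t - (T - δ) ≤ δ := by have := ht.2; linarith
  have hfinal : 2 * A ≤ 2 * A * δ ^ 2 / (t - (T - δ)) ^ 2 := by
    rw [le_div_iff₀ (by positivity)]
    have h1 : (t - (T - δ)) ^ 2 ≤ δ ^ 2 := by nlinarith
    nlinarith
  show S t ≤ 2 * A * δ ^ 2 / (t - (T - δ)) ^ 2
  linarith
end
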